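/- arXiv:2403.17766 — 4 statements merged into one kernel-verified Lean document; each statement's English description precedes it below -/
import Mathlib

section
/- Let n ∈ ℕ, p ∈ (0,1), and let H be a finite graph with |V(H)| ≤ n. Let P be the planted-H distribution on {0,1}^{E(K_n)}. Then for every edge set S ⊆ E(K_n), E_P[χ_S] = ( M_{S,H} / n_(|V(S)|) ) · ((1−p)/p)^{|S|/2}, where V(S) denotes the set of vertices of [n] incident to at least one edge of S, S is regarded as the graph with vertex set V(S) and edge set S, and n_(k) = n(n−1)⋯(n−k+1) is the falling factorial. -/
open Filter

namespace Planted

abbrev Edge (n : ℕ) := {e : Sym2 (Fin n) // ¬ e.IsDiag}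

abbrev EdgeFun (n : ℕ) := Edge n → Bool

noncomputable def nullWeight (n : ℕ) (p : ℝ) (X : EdgeFun n) : ℝ :=
  ∏ e : Edge n, if X e then p else 1 - p

noncomputable def expQ (n : ℕ) (p : ℝ) (f : EdgeFun n → ℝ) : ℝ :=
  ∑ X : EdgeFun n, nullWeight n p X * f X

noncomputable def varQ (n : ℕ) (p : ℝ) (f : EdgeFun n → ℝ) : ℝ :=
  expQ n p fun X => (f X - expQ n p f) ^ 2

open Classical in
noncomputable def plant {V : Type} (n : ℕ) (H : SimpleGraph V) (φ : V ↪ Fin n)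
    (X : EdgeFun n) : EdgeFun n :=
  fun e => if ∃ u v, H.Adj u v ∧ (e : Sym2 (Fin n)) = s(φ u, φ v) then true else X e

open Classical in
noncomputable def expP {V : Type} [Fintype V] (n : ℕ) (p : ℝ) (H : SimpleGraph V)
    (f : EdgeFun n → ℝ) : ℝ :=
  (Fintype.card (V ↪ Fin n) : ℝ)⁻¹ *
    ∑ φ : V ↪ Fin n, ∑ X : EdgeFun n, nullWeight n p X * f (plant n H φ X)

noncomputable def varP {V : Type} [Fintype V] (n : ℕ) (p : ℝ) (H : SimpleGraph V)
    (f : EdgeFun n → ℝ) : ℝ :=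
  expP n p H fun X => (f X - expP n p H f) ^ 2

noncomputable def chi (n : ℕ) (p : ℝ) (S : Finset (Edge n)) (X : EdgeFun n) : ℝ :=
  ∏ e ∈ S, ((if X e then (1 : ℝ) else 0) - p) / Real.sqrt (p * (1 - p))

def IsDegreeLE (n : ℕ) (p : ℝ) (D : ℕ) (f : EdgeFun n → ℝ) : Prop :=
  f ∈ Submodule.span ℝ {g : EdgeFun n → ℝ | ∃ S : Finset (Edge n), S.card ≤ D ∧ g = chi n p S}

noncomputable def advOf {V : Type} [Fintype V] (n : ℕ) (p : ℝ) (H : SimpleGraph V)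
    (f : EdgeFun n → ℝ) : ℝ :=
  expP n p H f / Real.sqrt (expQ n p fun X => f X ^ 2)

noncomputable def Adv {V : Type} [Fintype V] (n : ℕ) (p : ℝ) (D : ℕ)
    (H : SimpleGraph V) : ℝ :=
  sSup {r : ℝ | ∃ f, IsDegreeLE n p D f ∧ f ≠ 0 ∧ r = advOf n p H f}

def IsStar (n t : ℕ) (S : Finset (Edge n)) : Prop :=
  S.card = t ∧ ∃ v : Fin n, ∀ e ∈ S, v ∈ (e : Sym2 (Fin n))

open Classical in
noncomputable def starCount (n : ℕ) (p : ℝ) (t : ℕ) : EdgeFun n → ℝ :=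
  fun X => ∑ S : Finset (Edge n), if IsStar n t S then chi n p S X else 0

def StronglySeparates {Vf : ℕ → Type} [∀ n, Fintype (Vf n)] (p : ℕ → ℝ)
    (H : ∀ n, SimpleGraph (Vf n)) (f : ∀ n, EdgeFun n → ℝ) : Prop :=
  (fun n => max (Real.sqrt (varP n (p n) (H n) (f n))) (Real.sqrt (varQ n (p n) (f n))))
    =o[atTop] fun n => expP n (p n) (H n) (f n) - expQ n (p n) (f n)

noncomputable def copyCount {α β : Type} (S : SimpleGraph α) (G : SimpleGraph β) : ℕ :=
  Nat.card {f : α ↪ β // ∀ u v, S.Adj u v → G.Adj (f u) (f v)}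

def starGraph (t : ℕ) : SimpleGraph (Fin (t + 1)) :=
  SimpleGraph.fromRel fun u _ => u = 0

open Classical in
noncomputable def edgeVerts (n : ℕ) (S : Finset (Edge n)) : Finset (Fin n) :=
  Finset.univ.filter fun v => ∃ e ∈ S, v ∈ (e : Sym2 (Fin n))

def finsetGraph (n : ℕ) (S : Finset (Edge n)) :
    SimpleGraph {v : Fin n // v ∈ edgeVerts n S} where
  Adj u v := ∃ e ∈ S, (e : Sym2 (Fin n)) = s(u.1, v.1)
  symm := by
    constructor
    rintro u v ⟨e, he, heq⟩
    exact ⟨e, he, heq.trans Sym2.eq_swap⟩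
  loopless := by
    constructor
    rintro u ⟨e, he, heq⟩
    exact e.2 (by rw [heq]; exact Sym2.mk_isDiag_iff.mpr rfl)

noncomputable def finCopyCount (n : ℕ) (S : Finset (Edge n)) {V : Type}
    (H : SimpleGraph V) : ℕ :=
  copyCount (finsetGraph n S) H

end Planted

/-! Averaging over the null coordinates first, `χ_S` of the planted graph factors over the
edges of `S`: with `σ = √(p(1-p))`, an edge that was not planted contributes the mean
`E[(X_e - p)/σ] = 0`, a planted one the constant `(1 - p)/σ = √((1 - p)/p)`. Hence
`E_P χ_S = ((1-p)/p)^{|S|/2} · Pr_φ[S ⊆ φ(H)]`. An embedding `φ` whose image covers `S` is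
the same as a copy `ψ = φ⁻¹` of the graph `S` in `H` together with an embedding of `V(H)`
into `[n]` extending `ψ⁻¹`, and every copy has `n_(|V(H)|) / n_(|V(S)|)` such extensions. -/

theorem one_sub_div_sqrt_pow {p : ℝ} (hp : p ∈ Set.Ioo (0 : ℝ) 1) (k : ℕ) :
    ((1 - p) / √(p * (1 - p))) ^ k = ((1 - p) / p) ^ ((k : ℝ) / 2) := by
  have hq : 0 < 1 - p := sub_pos.2 hp.2
  have hsqrt : (1 - p) / √(p * (1 - p)) = √((1 - p) / p) := by
    rw [show (1 - p) / p = (1 - p) ^ 2 / (p * (1 - p)) by field_simp,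
      Real.sqrt_div (sq_nonneg _), Real.sqrt_sq hq.le]
  rw [hsqrt, Real.sqrt_eq_rpow, ← Real.rpow_natCast, ← Real.rpow_mul (div_pos hq hp.1).le]
  ring_nf

theorem card_embedding_extending_mul_descFactorial {A V β : Type*} [Fintype A] [Fintype V]
    [Fintype β] (ψ : A ↪ V) (ι : A ↪ β) :
    Nat.card {φ : V ↪ β // ∀ a, φ (ψ a) = ι a} *
        (Fintype.card β).descFactorial (Fintype.card A) =
      (Fintype.card β).descFactorial (Fintype.card V) := by
  classical
  let e : A ⊕ ↥(Set.range ψ)ᶜ ≃ V :=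
    (Equiv.sumCongr (Equiv.ofInjective ψ ψ.injective) (Equiv.refl _)).trans
      (Equiv.sumCompl (· ∈ Set.range ψ))
  let E : (V ↪ β) ≃ Σ f : A ↪ β, ↥(Set.range ψ)ᶜ ↪ ↥(Set.range f)ᶜ :=
    (Equiv.embeddingCongr e.symm (Equiv.refl β)).trans
      Equiv.sumEmbeddingEquivSigmaEmbeddingRestricted
  have hE : ∀ φ, (∀ a, φ (ψ a) = ι a) ↔ (E φ).1 = ι := fun φ => by
    rw [Function.Embedding.ext_iff]
    rfl
  rw [Nat.card_congr ((E.subtypeEquiv hE).trans (Equiv.sigmaSubtype ι)),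
    Nat.card_eq_fintype_card, Fintype.card_embedding_eq, Fintype.card_compl_set,
    Fintype.card_compl_set, Set.card_range_of_injective ψ.injective,
    Set.card_range_of_injective ι.injective]
  exact Nat.descFactorial_mul_descFactorial (Fintype.card_le_of_embedding ψ)

namespace Planted

variable {V : Type} {n : ℕ}

theorem expQ_prod (p : ℝ) (g : Edge n → Bool → ℝ) :
    expQ n p (fun X => ∏ e, g e (X e)) = ∏ e, (p * g e true + (1 - p) * g e false) := by
  classical
  simp only [expQ, nullWeight, ← Finset.prod_mul_distrib]
  rw [← Fintype.prod_sum (fun e b => (if b then p else 1 - p) * g e b)]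
  simp

theorem expQ_chi_override (p : ℝ) (S : Finset (Edge n)) (T : Set (Edge n))
    [DecidablePred (· ∈ T)] :
    expQ n p (fun X => chi n p S (fun e => if e ∈ T then true else X e)) =
      if ∀ e ∈ S, e ∈ T then ((1 - p) / √(p * (1 - p))) ^ S.card else 0 := by
  set χ : Bool → ℝ := fun b => ((if b then (1 : ℝ) else 0) - p) / √(p * (1 - p))
  have hchi : ∀ Y : EdgeFun n, chi n p S Y = ∏ e, if e ∈ S then χ (Y e) else 1 := fun Y => by
    rw [chi, Finset.prod_ite_mem, Finset.univ_inter]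
  have hmean : p * χ true + (1 - p) * χ false = 0 := by
    simp only [χ, if_true, Bool.false_eq_true, if_false]
    ring
  have hfactor : ∀ e, p * (if e ∈ S then χ (if e ∈ T then true else true) else 1) +
      (1 - p) * (if e ∈ S then χ (if e ∈ T then true else false) else 1) =
      if e ∈ S then (if e ∈ T then χ true else 0) else 1 := fun e => by
    split_ifs <;> first | exact hmean | ring
  simp only [hchi]
  rw [expQ_prod p (fun e b => if e ∈ S then χ (if e ∈ T then true else b) else 1)]
  simp only [hfactor]
  rw [Finset.prod_ite_mem, Finset.univ_inter, Finset.prod_ite_zero, Finset.prod_const]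
  simp only [χ, if_true]

def plantedEdges (H : SimpleGraph V) (φ : V ↪ Fin n) : Set (Edge n) :=
  {e | ∃ u v, H.Adj u v ∧ (e : Sym2 (Fin n)) = s(φ u, φ v)}

theorem mem_edgeVerts {S : Finset (Edge n)} {v : Fin n} :
    v ∈ edgeVerts n S ↔ ∃ e ∈ S, v ∈ (e : Sym2 (Fin n)) := by
  classical
  simp [edgeVerts]

theorem forall_mem_plantedEdges_iff {H : SimpleGraph V} {S : Finset (Edge n)} {φ : V ↪ Fin n} :
    (∀ e ∈ S, e ∈ plantedEdges H φ) ↔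
      ∃ f : {v // v ∈ edgeVerts n S} ↪ V,
        (∀ u v, (finsetGraph n S).Adj u v → H.Adj (f u) (f v)) ∧ ∀ a, φ (f a) = a := by
  constructor
  · intro hS
    have hrange : ∀ a : {v // v ∈ edgeVerts n S}, a.1 ∈ Set.range φ := fun a => by
      obtain ⟨e, he, hae⟩ := mem_edgeVerts.1 a.2
      obtain ⟨u, v, -, huv⟩ := hS e he
      rw [huv, Sym2.mem_iff] at hae
      rcases hae with h | h
      exacts [⟨u, h.symm⟩, ⟨v, h.symm⟩]
    let f a := (Equiv.ofInjective φ φ.injective).symm ⟨a.1, hrange a⟩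
    have hf : ∀ a, φ (f a) = a := fun a => Equiv.apply_ofInjective_symm φ.injective _
    refine ⟨⟨f, fun a b hab => Subtype.ext (by rw [← hf a, ← hf b, hab])⟩, ?_, hf⟩
    rintro a b ⟨e, he, hab⟩
    obtain ⟨u, v, huv, hφ⟩ := hS e he
    have : s(f a, f b) = s(u, v) := by
      apply Sym2.map.injective φ.injective
      simp only [Sym2.map_mk, hf, ← hab, hφ]
    show H.Adj (f a) (f b)
    rw [← SimpleGraph.mem_edgeSet, this]
    exact huv
  · rintro ⟨f, hom, hf⟩ e he
    induction e using Subtype.rec with | _ z => ?_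
    induction z using Sym2.ind with | _ x y => ?_
    have hx : x ∈ edgeVerts n S := mem_edgeVerts.2 ⟨_, he, Sym2.mem_mk_left x y⟩
    have hy : y ∈ edgeVerts n S := mem_edgeVerts.2 ⟨_, he, Sym2.mem_mk_right x y⟩
    refine ⟨f ⟨x, hx⟩, f ⟨y, hy⟩, hom _ _ ⟨_, he, rfl⟩, ?_⟩
    rw [hf, hf]

theorem card_forall_mem_plantedEdges_mul [Fintype V] (H : SimpleGraph V)
    (S : Finset (Edge n)) :
    Nat.card {φ : V ↪ Fin n // ∀ e ∈ S, e ∈ plantedEdges H φ} *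
        n.descFactorial (edgeVerts n S).card =
      finCopyCount n S H * n.descFactorial (Fintype.card V) := by
  classical
  let Copy := {f : {v // v ∈ edgeVerts n S} ↪ V //
    ∀ u v, (finsetGraph n S).Adj u v → H.Adj (f u) (f v)}
  let extending (f : Copy) := Finset.univ.filter fun φ : V ↪ Fin n => ∀ a, φ (f.1 a) = a
  have hunion : Finset.univ.filter (fun φ : V ↪ Fin n => ∀ e ∈ S, e ∈ plantedEdges H φ) =
      Finset.univ.biUnion extending := by
    ext φ
    simp only [Finset.mem_filter, Finset.mem_univ, true_and, Finset.mem_biUnion, extending,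
      forall_mem_plantedEdges_iff, Subtype.exists, exists_prop, Copy]
  have hdisj : ((Finset.univ : Finset Copy) : Set Copy).PairwiseDisjoint extending := by
    intro f _ g _ hfg
    refine Finset.disjoint_filter.2 fun φ _ hf hg => hfg (Subtype.ext ?_)
    exact Function.Embedding.ext fun a => φ.injective ((hf a).trans (hg a).symm)
  have hextending (f : Copy) : (extending f).card * n.descFactorial (edgeVerts n S).card =
      n.descFactorial (Fintype.card V) := by
    have := card_embedding_extending_mul_descFactorial f.1
      (Function.Embedding.subtype (· ∈ edgeVerts n S))
    rwa [Fintype.card_coe, Fintype.card_fin, Nat.card_eq_fintype_card,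
      Fintype.card_subtype] at this
  rw [Nat.card_eq_fintype_card, Fintype.card_subtype, hunion, Finset.card_biUnion hdisj,
    Finset.sum_mul, Finset.sum_congr rfl fun f _ => hextending f, Finset.sum_const,
    Finset.card_univ, smul_eq_mul, finCopyCount, copyCount, Nat.card_eq_fintype_card]

end Planted

open Planted in
/-- the planted expectation of a Walsh–Fourier character. -/
theorem expP_chi
    {V : Type} [Fintype V] (n : ℕ) (p : ℝ) (hp : p ∈ Set.Ioo (0 : ℝ) 1)
    (H : SimpleGraph V) (hcard : Fintype.card V ≤ n)
    (S : Finset (Edge n)) :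
    expP n p H (chi n p S) =
      (finCopyCount n S H : ℝ) / (n.descFactorial (edgeVerts n S).card : ℝ) *
        ((1 - p) / p) ^ ((S.card : ℝ) / 2) := by
  classical
  have hplanted : ∀ φ : V ↪ Fin n, expQ n p (fun X => chi n p S (plant n H φ X)) =
      if ∀ e ∈ S, e ∈ plantedEdges H φ then ((1 - p) / √(p * (1 - p))) ^ S.card else 0 :=
    fun φ => expQ_chi_override p S (plantedEdges H φ)
  have hcount := card_forall_mem_plantedEdges_mul H S
  have hk : n.descFactorial (edgeVerts n S).card ≠ 0 :=
    Nat.descFactorial_eq_zero_iff_lt.not.2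
      ((Finset.card_le_univ _).trans_eq (Fintype.card_fin n)).not_gt
  have hm : n.descFactorial (Fintype.card V) ≠ 0 :=
    Nat.descFactorial_eq_zero_iff_lt.not.2 hcard.not_gt
  rw [Nat.card_eq_fintype_card, Fintype.card_subtype] at hcount
  change (Fintype.card (V ↪ Fin n) : ℝ)⁻¹ *
    ∑ φ, expQ n p (fun X => chi n p S (plant n H φ X)) = _
  rw [Finset.sum_congr rfl fun φ _ => hplanted φ, Finset.sum_ite, Finset.sum_const_zero,
    add_zero, Finset.sum_const, nsmul_eq_mul, Fintype.card_embedding_eq, Fintype.card_fin,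
    one_sub_div_sqrt_pow hp]
  rw [← mul_assoc]
  congr 1
  field_simp
  exact_mod_cast hcount.trans (mul_comm _ _)
end

section
/- Fix an integer t ≥ 1. For each n ∈ ℕ, let k_n ∈ ℕ and let d^{(n)} : [k_n] → ℕ satisfy d^{(n)}_i ≤ k_n for all i. If (Σ_{i∈[k_n]} (d^{(n)}_i)^t) / k_n → ∞ as n → ∞, then (Σ_{i∈[k_n]} (d^{(n)}_i)_(t)) / (Σ_{i∈[k_n]} (d^{(n)}_i)^t) → 1 as n → ∞, where (d)_(t) = d(d−1)⋯(d−t+1) is the falling factorial (equal to 0 when d < t). In particular Σ_i (d^{(n)}_i)_(t) = (1−o(1)) Σ_i (d^{(n)}_i)^t. -/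
/-!
Since `d ^ t - (d)_t ≤ t² d ^ (t - 1)`, it suffices to show that `∑ d_i ^ (t - 1)` is
`o(∑ d_i ^ t)`. Splitting at a threshold `T`, each term is at most `d_i ^ t / T + T ^ (t - 1)`,
so `∑ d_i ^ (t - 1) ≤ (∑ d_i ^ t) / T + k T ^ (t - 1)`; the first part is small for `T` large and
the second is `o(∑ d_i ^ t)` because `k = o(∑ d_i ^ t)`.
-/

open Filter Finset

lemma Nat.cast_descFactorial_succ {R : Type*} [Ring R] (d t : ℕ) :
    (d.descFactorial (t + 1) : R) = ((d : R) - t) * d.descFactorial t := by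
  rcases le_or_gt t d with htd | hdt
  · rw [Nat.descFactorial_succ, Nat.cast_mul, Nat.cast_sub htd]
  · simp [Nat.descFactorial_eq_zero_iff_lt.mpr hdt]

lemma pow_sub_descFactorial_le (d t : ℕ) :
    (d : ℝ) ^ t - d.descFactorial t ≤ (t : ℝ) ^ 2 * (d : ℝ) ^ (t - 1) := by
  induction t with
  | zero => simp
  | succ t ih =>
    have hfac : (d.descFactorial t : ℝ) ≤ (d : ℝ) ^ t := by
      exact_mod_cast Nat.descFactorial_le_pow d t
    have hpow : (t : ℝ) ^ 2 * ((d : ℝ) * (d : ℝ) ^ (t - 1)) = (t : ℝ) ^ 2 * (d : ℝ) ^ t := by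
      rcases t.eq_zero_or_pos with rfl | ht
      · simp
      · rw [mul_pow_sub_one ht.ne']
    calc (d : ℝ) ^ (t + 1) - d.descFactorial (t + 1)
        = d * ((d : ℝ) ^ t - d.descFactorial t) + t * d.descFactorial t := by
          rw [Nat.cast_descFactorial_succ]; ring
      _ ≤ d * ((t : ℝ) ^ 2 * (d : ℝ) ^ (t - 1)) + t * (d : ℝ) ^ t := by
          gcongr
      _ ≤ ((t + 1 : ℕ) : ℝ) ^ 2 * (d : ℝ) ^ (t + 1 - 1) := by
          rw [Nat.add_sub_cancel, mul_left_comm, hpow]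
          push_cast
          nlinarith [pow_nonneg (Nat.cast_nonneg d : (0 : ℝ) ≤ d) t]

lemma pow_sub_one_le_pow_div_add {x T : ℝ} (hx : 0 ≤ x) (hT : 0 < T) (t : ℕ) :
    x ^ (t - 1) ≤ x ^ t / T + T ^ (t - 1) := by
  cases t with
  | zero => simpa using inv_nonneg.2 hT.le
  | succ m =>
    rw [Nat.add_sub_cancel]
    rcases le_total T x with hTx | hxT
    · have : x ^ m ≤ x ^ (m + 1) / T := by
        rw [le_div_iff₀ hT, pow_succ]; gcongr
      linarith [pow_pos hT m]
    · linarith [pow_le_pow_left₀ hx hxT m, div_nonneg (pow_nonneg hx (m + 1)) hT.le]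

lemma one_sub_sum_descFactorial_div_le {ι : Type*} [Fintype ι] (d : ι → ℕ) (t : ℕ) {T : ℝ}
    (hT : 0 < T) (hS : 0 < ∑ i, (d i : ℝ) ^ t) :
    1 - (∑ i, ((d i).descFactorial t : ℝ)) / ∑ i, (d i : ℝ) ^ t ≤
      (t : ℝ) ^ 2 / T + (t : ℝ) ^ 2 * T ^ (t - 1) * (Fintype.card ι / ∑ i, (d i : ℝ) ^ t) := by
  set S := ∑ i, (d i : ℝ) ^ t
  have hdiff : S - ∑ i, ((d i).descFactorial t : ℝ) ≤
      (t : ℝ) ^ 2 * (S / T + Fintype.card ι * T ^ (t - 1)) := by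
    calc S - ∑ i, ((d i).descFactorial t : ℝ)
        ≤ ∑ i, (t : ℝ) ^ 2 * (d i : ℝ) ^ (t - 1) := by
          rw [← sum_sub_distrib]
          exact sum_le_sum fun i _ ↦ pow_sub_descFactorial_le (d i) t
      _ ≤ ∑ i, (t : ℝ) ^ 2 * ((d i : ℝ) ^ t / T + T ^ (t - 1)) := by
          gcongr with i
          exact pow_sub_one_le_pow_div_add (Nat.cast_nonneg _) hT t
      _ = (t : ℝ) ^ 2 * (S / T + Fintype.card ι * T ^ (t - 1)) := by
          rw [← mul_sum, sum_add_distrib, ← sum_div, sum_const, card_univ, nsmul_eq_mul]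
  rw [one_sub_div hS.ne', div_le_iff₀ hS]
  refine hdiff.trans_eq ?_
  field_simp

theorem sum_descFactorial_asymptotic_general
    (t : ℕ)
    (k : ℕ → ℕ) (d : (n : ℕ) → Fin (k n) → ℕ)
    (h : Tendsto (fun n => (∑ i, (d n i : ℝ) ^ t) / (k n : ℝ)) atTop atTop) :
    Tendsto
      (fun n => (∑ i, ((d n i).descFactorial t : ℝ)) / (∑ i, (d n i : ℝ) ^ t))
      atTop (nhds 1) := by
  have hS : ∀ᶠ n in atTop, 0 < ∑ i, (d n i : ℝ) ^ t :=
    (h.eventually_gt_atTop 0).mono fun n hn ↦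
      (sum_nonneg fun i _ ↦ by positivity).lt_of_ne fun h0 ↦ by simp [← h0] at hn
  have hkS : Tendsto (fun n ↦ (k n : ℝ) / ∑ i, (d n i : ℝ) ^ t) atTop (nhds 0) :=
    h.inv_tendsto_atTop.congr fun n ↦ inv_div _ _
  have hle_one (n : ℕ) :
      (∑ i, ((d n i).descFactorial t : ℝ)) / ∑ i, (d n i : ℝ) ^ t ≤ 1 :=
    div_le_one_of_le₀ (sum_le_sum fun i _ ↦ by exact_mod_cast Nat.descFactorial_le_pow _ _)
      (sum_nonneg fun i _ ↦ by positivity)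
  refine tendsto_order.2 ⟨fun a ha ↦ ?_, fun b hb ↦ .of_forall fun n ↦ (hle_one n).trans_lt hb⟩
  have hT_large : ∀ᶠ T in atTop, (t : ℝ) ^ 2 / T < 1 - a :=
    (tendsto_const_nhds.div_atTop tendsto_id).eventually (gt_mem_nhds (sub_pos.2 ha))
  obtain ⟨T, hTa, hT⟩ := (hT_large.and (eventually_gt_atTop 0)).exists
  have hbound : Tendsto (fun n ↦ (t : ℝ) ^ 2 / T + (t : ℝ) ^ 2 * T ^ (t - 1) *
      ((k n : ℝ) / ∑ i, (d n i : ℝ) ^ t)) atTop (nhds ((t : ℝ) ^ 2 / T)) := by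
    simpa using tendsto_const_nhds.add (hkS.const_mul ((t : ℝ) ^ 2 * T ^ (t - 1)))
  filter_upwards [hbound.eventually (gt_mem_nhds hTa), hS] with n hn hSn
  have hdefect := one_sub_sum_descFactorial_div_le (d n) t hT hSn
  rw [Fintype.card_fin] at hdefect
  linarith

/-- sums of falling factorials of bounded degree sequences are asymptotically
equal to the corresponding power sums, provided the power sum is `ω(k)`. -/
theorem sum_descFactorial_asymptotic
    (t : ℕ) (ht : 1 ≤ t)
    (k : ℕ → ℕ) (d : (n : ℕ) → Fin (k n) → ℕ)
    (hd : ∀ n i, d n i ≤ k n)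
    (h : Tendsto (fun n => (∑ i, (d n i : ℝ) ^ t) / (k n : ℝ)) atTop atTop) :
    Tendsto
      (fun n => (∑ i, ((d n i).descFactorial t : ℝ)) / (∑ i, (d n i : ℝ) ^ t))
      atTop (nhds 1) :=
  sum_descFactorial_asymptotic_general t k d h
end

section
/- Let a, b be nonnegative integers with a ≥ b. Then the falling factorial satisfies (a)_(b) = a!/(a−b)! ≥ a^b · exp( − b² / (2(a−b+1)) ). -/
/-!
Write `(a)_b = ∏_{i<b} (a - i)`. Since `1 + t ≤ exp t` with `t = i / (a - i)` gives
`a - i ≥ a · exp (-i / (a - i))`, we get `(a)_b ≥ a^b · exp (-∑_{i<b} i / (a - i))`, and each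
denominator is at least `a - b + 1`, so the sum is at most `(∑_{i<b} i) / (a - b + 1) ≤ b² / (2 (a - b + 1))`.
-/

open Finset Real

theorem Nat.cast_descFactorial_eq_prod_range {R : Type*} [CommRing R] (a b : ℕ) :
    (a.descFactorial b : R) = ∏ i ∈ range b, ((a : R) - i) := by
  rw [← descPochhammer_eval_eq_descFactorial, descPochhammer_eval_eq_prod_range]

theorem Finset.sum_range_cast_le_sq_div_two (n : ℕ) :
    ∑ i ∈ range n, (i : ℝ) ≤ (n : ℝ) ^ 2 / 2 := by
  have hgauss : ((∑ i ∈ range n, i : ℕ) : ℝ) * 2 = n * (n - 1 : ℕ) := by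
    exact_mod_cast sum_range_id_mul_two n
  have hpred : ((n - 1 : ℕ) : ℝ) ≤ n := by exact_mod_cast n.sub_le 1
  push_cast at hgauss
  nlinarith [n.cast_nonneg (α := ℝ)]

theorem Real.mul_exp_neg_div_sub_le {x y : ℝ} (h : y < x) :
    x * exp (-(y / (x - y))) ≤ x - y := by
  have hpos : 0 < x - y := sub_pos.mpr h
  rw [exp_neg, mul_inv_le_iff₀ (exp_pos _)]
  calc x = (x - y) * (y / (x - y) + 1) := by field_simp; ring
    _ ≤ (x - y) * exp (y / (x - y)) := by gcongr; exact add_one_le_exp _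

theorem Real.pow_mul_exp_neg_sum_le_prod_sub {x : ℝ} (hx : 0 ≤ x) {n : ℕ} (hn : (n : ℝ) < x + 1) :
    x ^ n * exp (-∑ i ∈ range n, (i : ℝ) / (x - i)) ≤ ∏ i ∈ range n, (x - i) :=
  calc x ^ n * exp (-∑ i ∈ range n, (i : ℝ) / (x - i))
      = ∏ i ∈ range n, x * exp (-((i : ℝ) / (x - i))) := by
        rw [← sum_neg_distrib, exp_sum, ← pow_card_mul_prod, card_range]
    _ ≤ ∏ i ∈ range n, (x - i) := by
        refine prod_le_prod (fun i _ => by positivity) (fun i hi => mul_exp_neg_div_sub_le ?_)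
        have : (i : ℝ) + 1 ≤ n := by exact_mod_cast mem_range.mp hi
        linarith

theorem Real.sum_range_div_sub_le {x : ℝ} {n : ℕ} (hn : (n : ℝ) < x + 1) :
    ∑ i ∈ range n, (i : ℝ) / (x - i) ≤ (n : ℝ) ^ 2 / (2 * (x - n + 1)) := by
  have hden : 0 < x - n + 1 := by linarith
  calc ∑ i ∈ range n, (i : ℝ) / (x - i)
      ≤ ∑ i ∈ range n, (i : ℝ) / (x - n + 1) := by
        refine sum_le_sum (fun i hi => ?_)
        have : (i : ℝ) + 1 ≤ n := by exact_mod_cast mem_range.mp hi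
        gcongr
        linarith
    _ = (∑ i ∈ range n, (i : ℝ)) / (x - n + 1) := by rw [sum_div]
    _ ≤ (n : ℝ) ^ 2 / 2 / (x - n + 1) := by gcongr; exact sum_range_cast_le_sq_div_two n
    _ = (n : ℝ) ^ 2 / (2 * (x - n + 1)) := by rw [div_div]

theorem Real.pow_mul_exp_neg_sq_div_le_prod_sub {x : ℝ} (hx : 0 ≤ x) {n : ℕ}
    (hn : (n : ℝ) < x + 1) :
    x ^ n * exp (-(n : ℝ) ^ 2 / (2 * (x - n + 1))) ≤ ∏ i ∈ range n, (x - i) :=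
  calc x ^ n * exp (-(n : ℝ) ^ 2 / (2 * (x - n + 1)))
      ≤ x ^ n * exp (-∑ i ∈ range n, (i : ℝ) / (x - i)) := by
        gcongr
        rw [neg_div, neg_le_neg_iff]
        exact sum_range_div_sub_le hn
    _ ≤ ∏ i ∈ range n, (x - i) := pow_mul_exp_neg_sum_le_prod_sub hx hn

/-- lower bound on the falling factorial. -/
theorem descFactorial_ge_pow_mul_exp
    (a b : ℕ) (h : b ≤ a) :
    a.descFactorial b = a.factorial / (a - b).factorial ∧
    (a : ℝ) ^ b * Real.exp (-(b : ℝ) ^ 2 / (2 * ((a : ℝ) - (b : ℝ) + 1))) ≤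
      (a.descFactorial b : ℝ) := by
  have hb : (b : ℝ) < a + 1 := by
    have : (b : ℝ) ≤ a := by exact_mod_cast h
    linarith
  refine ⟨Nat.descFactorial_eq_div h, ?_⟩
  rw [Nat.cast_descFactorial_eq_prod_range]
  exact pow_mul_exp_neg_sq_div_le_prod_sub a.cast_nonneg hb
end

section
/- Let d and t be natural numbers with t ≥ 1. Then the falling factorial satisfies (d)_(t) ≥ d^t − t^t − t²·d^{t−1}, as an inequality of integers (equivalently of real numbers), where (d)_(t) = d(d−1)⋯(d−t+1), with (d)_(t) = 0 when d < t. -/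
/-! For `t ≤ d` every factor of `(d)_(t)` is at least `d - t`, so `(d)_(t) ≥ (d - t)^t`, and the
mean value bound `d^t - (d - t)^t ≤ t · t · d^(t-1)` finishes. For `d < t` the falling factorial
vanishes and `d^t ≤ t^t` already makes the left-hand side nonpositive. -/

theorem pow_sub_pow_le_of_le {R : Type*} [CommRing R] [LinearOrder R] [IsOrderedRing R]
    {a b : R} (hb : 0 ≤ b) (hba : b ≤ a) (n : ℕ) :
    a ^ n - b ^ n ≤ (a - b) * n * a ^ (n - 1) := by
  have hmax : max |a| |b| = a := by
    rw [abs_of_nonneg hb, abs_of_nonneg (hb.trans hba), max_eq_left hba]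
  simpa [abs_of_nonneg (sub_nonneg.mpr hba), hmax] using
    (le_abs_self _).trans (abs_pow_sub_pow_le a b n)

theorem Nat.sub_pow_le_descFactorial_int {d t : ℕ} (h : t ≤ d) :
    ((d : ℤ) - t) ^ t ≤ d.descFactorial t := by
  calc ((d : ℤ) - t) ^ t ≤ ((d + 1 - t : ℕ) : ℤ) ^ t := by
        gcongr
        · exact sub_nonneg.mpr (mod_cast h)
        · rw [Nat.sub_add_comm h]
          push_cast [h]
          linarith
    _ ≤ d.descFactorial t := mod_cast d.pow_sub_le_descFactorial t

theorem descFactorial_ge_pow_sub_general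
    (d t : ℕ) :
    (d : ℤ) ^ t - (t : ℤ) ^ t - (t : ℤ) ^ 2 * (d : ℤ) ^ (t - 1) ≤
      (d.descFactorial t : ℤ) := by
  have hcorr : (0 : ℤ) ≤ (t : ℤ) ^ 2 * (d : ℤ) ^ (t - 1) := by positivity
  rcases lt_or_ge d t with hdt | htd
  · have hpow : (d : ℤ) ^ t ≤ (t : ℤ) ^ t := by gcongr
    rw [Nat.descFactorial_eq_zero_iff_lt.mpr hdt, Nat.cast_zero]
    linarith
  · have hmean : (d : ℤ) ^ t - ((d : ℤ) - t) ^ t ≤ (t : ℤ) ^ 2 * (d : ℤ) ^ (t - 1) := by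
      have := pow_sub_pow_le_of_le (sub_nonneg.mpr (mod_cast htd))
        (sub_le_self (d : ℤ) t.cast_nonneg) t
      rwa [sub_sub_cancel, ← sq] at this
    have htt : (0 : ℤ) ≤ (t : ℤ) ^ t := by positivity
    linarith [Nat.sub_pow_le_descFactorial_int htd]

/-- integer lower bound on the falling factorial. -/
theorem descFactorial_ge_pow_sub
    (d t : ℕ) (ht : 1 ≤ t) :
    (d : ℤ) ^ t - (t : ℤ) ^ t - (t : ℤ) ^ 2 * (d : ℤ) ^ (t - 1) ≤
      (d.descFactorial t : ℤ) :=
  descFactorial_ge_pow_sub_general d t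
end
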